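/- arXiv:2009.02272 — 2 statements merged into one kernel-verified Lean document; each statement's English description precedes it below -/
import Mathlib

section
/- For every natural number n, the degree of p^B_{n,n+1}(x) equals n+1, and for every k ∈ {0,1,…,n} the degree of p^B_{n,k}(x) equals n. -/
/-!
Every `p^B_{n,k}` has nonnegative coefficients, since the recursion only adds polynomials and
multiplies them by `x` and `2`. Hence leading terms never cancel, the degree of a sum is the
maximum of the degrees of its summands, and the degrees follow by induction on `n`: the summand
`p^B_{n,n+1}` of degree `n + 1` dominates every sum except `∑_{i<k} p^B_{n,i}`, which has
degree `n` but is multiplied by `x`.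
-/

open Polynomial PowerSeries

/-- The polynomials `p^B_{n,k}` defined recursively as in
Proposition (e): `p^B_{0,0} = 1`, `p^B_{0,1} = x`,
`p^B_{n+1,0} = ∑_{i=0}^{n+1} p^B_{n,i}`,
`p^B_{n+1,k} = 2x ∑_{i=0}^{k-1} p^B_{n,i} + 2 ∑_{i=k}^{n+1} p^B_{n,i}` for `1 ≤ k ≤ n+1`, and
`p^B_{n+1,n+2} = x ∑_{i=0}^{n+1} p^B_{n,i}`. -/
noncomputable def pB : ℕ → ℕ → Polynomial ℝ
  | 0, 0 => 1
  | 0, 1 => Polynomial.X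
  | 0, _ + 2 => 0
  | n + 1, 0 => ∑ i ∈ Finset.range (n + 2), pB n i
  | n + 1, k + 1 =>
      if k + 1 ≤ n + 1 then
        2 * Polynomial.X * (∑ i ∈ Finset.range (k + 1), pB n i) +
          2 * ∑ i ∈ Finset.Icc (k + 1) (n + 1), pB n i
      else if k + 1 = n + 2 then
        Polynomial.X * ∑ i ∈ Finset.range (n + 2), pB n i
      else 0
  termination_by n _ => n

namespace Polynomial

variable {R : Type*} [Semiring R] [PartialOrder R] [IsOrderedRing R]

variable (R) in
def nonnegCoeffs : Subsemiring R[X] where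
  carrier := {p | ∀ n, 0 ≤ p.coeff n}
  mul_mem' {p q} hp hq n := by
    rw [coeff_mul]
    exact Finset.sum_nonneg fun x _ => mul_nonneg (hp _) (hq _)
  one_mem' n := by
    rw [coeff_one]
    split_ifs <;> simp
  add_mem' {p q} hp hq n := by
    rw [coeff_add]
    exact add_nonneg (hp n) (hq n)
  zero_mem' n := by simp

theorem X_mem_nonnegCoeffs : (X : R[X]) ∈ nonnegCoeffs R := fun n => by
  rw [coeff_X]
  split_ifs <;> simp

theorem degree_add_of_mem_nonnegCoeffs {p q : R[X]} (hp : p ∈ nonnegCoeffs R)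
    (hq : q ∈ nonnegCoeffs R) : (p + q).degree = max p.degree q.degree := by
  rcases eq_or_ne p 0 with rfl | hp0
  · simp
  refine degree_add_eq_of_leadingCoeff_add_ne_zero fun h => hp0 ?_
  exact leadingCoeff_eq_zero.mp ((add_eq_zero_iff_of_nonneg (hp _) (hq _)).mp h).1

theorem degree_sum_of_mem_nonnegCoeffs {ι : Type*} {s : Finset ι} {f : ι → R[X]}
    (hf : ∀ i ∈ s, f i ∈ nonnegCoeffs R) :
    (∑ i ∈ s, f i).degree = s.sup fun i => (f i).degree := by
  induction s using Finset.cons_induction with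
  | empty => simp
  | cons a s ha ih =>
    rw [Finset.forall_mem_cons] at hf
    rw [Finset.sum_cons, Finset.sup_cons, degree_add_of_mem_nonnegCoeffs hf.1 (sum_mem hf.2),
      ih hf.2]

theorem degree_sum_eq_of_mem_nonnegCoeffs {ι : Type*} {s : Finset ι} {f : ι → R[X]}
    {d : WithBot ℕ} {j : ι} (hf : ∀ i ∈ s, f i ∈ nonnegCoeffs R)
    (hle : ∀ i ∈ s, (f i).degree ≤ d) (hj : j ∈ s) (hfj : (f j).degree = d) :
    (∑ i ∈ s, f i).degree = d := by
  rw [degree_sum_of_mem_nonnegCoeffs hf]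
  exact le_antisymm (Finset.sup_le hle) (hfj ▸ Finset.le_sup (f := fun i => (f i).degree) hj)

end Polynomial

theorem pB_succ_zero (n : ℕ) : pB (n + 1) 0 = ∑ i ∈ Finset.range (n + 2), pB n i := by
  rw [pB]

theorem pB_succ_succ_of_le {n k : ℕ} (hk : k ≤ n) :
    pB (n + 1) (k + 1) = 2 * Polynomial.X * ∑ i ∈ Finset.range (k + 1), pB n i +
      2 * ∑ i ∈ Finset.Icc (k + 1) (n + 1), pB n i := by
  rw [pB, if_pos (by omega)]

theorem pB_succ_succ_self (n : ℕ) :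
    pB (n + 1) (n + 2) = Polynomial.X * ∑ i ∈ Finset.range (n + 2), pB n i := by
  rw [pB, if_neg (by omega), if_pos rfl]

theorem pB_mem_nonnegCoeffs (n k : ℕ) : pB n k ∈ nonnegCoeffs ℝ := by
  induction n generalizing k with
  | zero =>
    match k with
    | 0 => rw [pB]; exact one_mem _
    | 1 => rw [pB]; exact X_mem_nonnegCoeffs
    | _ + 2 => rw [pB]; exact zero_mem _
  | succ n ih =>
    have hsum (s : Finset ℕ) : ∑ i ∈ s, pB n i ∈ nonnegCoeffs ℝ := sum_mem fun i _ => ih i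
    have htwo : (2 : ℝ[X]) ∈ nonnegCoeffs ℝ := ofNat_mem _ 2
    match k with
    | 0 => rw [pB]; exact hsum _
    | k + 1 =>
      rw [pB]
      split_ifs
      · exact add_mem (mul_mem (mul_mem htwo X_mem_nonnegCoeffs) (hsum _)) (mul_mem htwo (hsum _))
      · exact mul_mem X_mem_nonnegCoeffs (hsum _)
      · exact zero_mem _

theorem degree_pB (n : ℕ) :
    (pB n (n + 1)).degree = ↑(n + 1) ∧ ∀ k ≤ n, (pB n k).degree = n := by
  induction n with
  | zero =>
    refine ⟨by simp [pB], fun k hk => ?_⟩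
    obtain rfl : k = 0 := by omega
    simp [pB]
  | succ n ih =>
    obtain ⟨htop, hlow⟩ := ih
    have hnonneg (s : Finset ℕ) : ∑ i ∈ s, pB n i ∈ nonnegCoeffs ℝ :=
      sum_mem fun i _ => pB_mem_nonnegCoeffs n i
    have hle (i : ℕ) (hi : i ≤ n + 1) : (pB n i).degree ≤ ↑(n + 1) := by
      rcases Nat.lt_or_eq_of_le hi with hi | rfl
      · rw [hlow i (by omega)]
        exact_mod_cast n.le_succ
      · exact htop.le
    have hsum_top (s : Finset ℕ) (hs : ∀ i ∈ s, i ≤ n + 1) (hn : n + 1 ∈ s) :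
        (∑ i ∈ s, pB n i).degree = ↑(n + 1) :=
      degree_sum_eq_of_mem_nonnegCoeffs (fun i _ => pB_mem_nonnegCoeffs n i)
        (fun i hi => hle i (hs i hi)) hn htop
    have hsum_low (k : ℕ) (hk : k ≤ n) : (∑ i ∈ Finset.range (k + 1), pB n i).degree = n :=
      degree_sum_eq_of_mem_nonnegCoeffs (fun i _ => pB_mem_nonnegCoeffs n i)
        (fun i hi => (hlow i (Nat.le_of_lt_succ (Finset.mem_range.mp hi) |>.trans hk)).le)
        (Finset.self_mem_range_succ k) (hlow k hk)
    have hrange : (∑ i ∈ Finset.range (n + 2), pB n i).degree = ↑(n + 1) :=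
      hsum_top _ (fun i hi => Nat.lt_succ_iff.mp (Finset.mem_range.mp hi))
        (Finset.self_mem_range_succ (n + 1))
    refine ⟨?_, ?_⟩
    · rw [pB_succ_succ_self, Polynomial.X_mul, degree_mul_X, hrange]
      norm_cast
    · rintro (_ | k) hk
      · rw [pB_succ_zero, hrange]
      · have hIcc := hsum_top (Finset.Icc (k + 1) (n + 1)) (fun i hi => (Finset.mem_Icc.mp hi).2)
          (Finset.mem_Icc.mpr ⟨hk, le_rfl⟩)
        rw [pB_succ_succ_of_le (by omega), mul_assoc, ← mul_add, ← C_ofNat,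
          degree_C_mul two_ne_zero, degree_add_of_mem_nonnegCoeffs
            (mul_mem X_mem_nonnegCoeffs (hnonneg _)) (hnonneg _),
          Polynomial.X_mul, degree_mul_X, hsum_low k (by omega), hIcc]
        norm_cast
        simp

/-- The degree of `p^B_{n,n+1}` equals `n+1`, while the degree of `p^B_{n,k}` equals `n`
for every `k ∈ {0,1,…,n}`. -/
theorem pB_natDegree (n : ℕ) :
    (pB n (n + 1)).natDegree = n + 1 ∧ ∀ k ≤ n, (pB n k).natDegree = n := by
  obtain ⟨htop, hlow⟩ := degree_pB n
  exact ⟨natDegree_eq_of_degree_eq_some htop,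
    fun k hk => natDegree_eq_of_degree_eq_some (hlow k hk)⟩
end

section
/- Let n be a natural number and let f_0, …, f_n and h_0, …, h_{n+1} be real numbers satisfying the polynomial identity (1+x) · Σ_{k=0}^{n+1} h_k x^k = 1 + Σ_{k=0}^{n} f_k x^{k+1} ((1−x)/2)^{n−k} + h_{n+1} x^{n+2} in ℝ[x]. Then (1−x)^{n+1} + x · Σ_{k=0}^{n} f_k (1−x)^{n−k} B_k(x) = Σ_{k=0}^{n+1} h_k p^B_{n,k}(x) in ℝ[x]. -/
/-
Dividing by `(1 - x)^(n+1)` turns the claim into an identity of power series. The coefficient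
of `x^(m+1)` in `p^B_{n,k} / (1 - x)^(n+1)` is `w_{n,k}(2m+3, 2m+1)`, where
`w_{n,k}(a, b) = a^(n-k+1) b^(k-1) + a^(n-k) b^k` (terms with exponents outside `0..n` omitted);
this follows by induction on `n` from the recursion for `p^B`, the only input being `a - b = 2`.
Comparing coefficients of `x^(m+1)` leaves `∑ h_k w_{n,k}(a, b) = ∑ f_k b^k`. The left side is
the degree-`n` homogenization of `((1 + x) h(x) - h_0 - h_{n+1} x^(n+2)) / x`, which by hypothesis
(and `h_0 = 1`) is `∑ f_k x^k ((1 - x)/2)^(n-k)`; at `x = b/a`, scaled by `a^n`, this is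
`∑ f_k b^k` because `(a - b)/2 = 1`.
-/

open Polynomial PowerSeries

lemma one_add_mul_sum_range {R : Type*} [CommRing R] (c : ℕ → R) (x : R) (n : ℕ) :
    (1 + x) * ∑ k ∈ Finset.range (n + 2), c k * x ^ k =
      c 0 + x * ∑ j ∈ Finset.range (n + 1), (c j + c (j + 1)) * x ^ j +
        c (n + 1) * x ^ (n + 2) := by
  have hshift : x * ∑ j ∈ Finset.range (n + 1), (c j + c (j + 1)) * x ^ j =
      ∑ j ∈ Finset.range (n + 1), c (j + 1) * x ^ (j + 1) +
        x * ∑ j ∈ Finset.range (n + 1), c j * x ^ j := by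
    rw [Finset.mul_sum, Finset.mul_sum, ← Finset.sum_add_distrib]
    exact Finset.sum_congr rfl fun j _ => by ring
  linear_combination Finset.sum_range_succ' (fun k => c k * x ^ k) (n + 1) +
    x * Finset.sum_range_succ (fun k => c k * x ^ k) (n + 1) - hshift

lemma pow_mul_div_pow {K : Type*} [Field K] {a : K} (b : K) (ha : a ≠ 0) {n k : ℕ}
    (hk : k ≤ n) :
    a ^ n * (b / a) ^ k = a ^ (n - k) * b ^ k := by
  rw [← pow_sub_mul_pow a hk, mul_assoc, ← mul_pow, mul_div_cancel₀ _ ha]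

lemma coeff_succ_one_sub_X_mul {R : Type*} [CommRing R] (m : ℕ) (φ : R⟦X⟧) :
    PowerSeries.coeff (m + 1) ((1 - PowerSeries.X) * φ) =
      PowerSeries.coeff (m + 1) φ - PowerSeries.coeff m φ := by
  rw [sub_mul, one_mul, map_sub, coeff_succ_X_mul]

@[norm_cast]
lemma Polynomial.coe_finsetSum {R ι : Type*} [CommSemiring R] (s : Finset ι) (p : ι → R[X]) :
    ((∑ i ∈ s, p i : R[X]) : R⟦X⟧) = ∑ i ∈ s, (p i : R⟦X⟧) :=
  map_sum Polynomial.coeToPowerSeries.ringHom p s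

section Weights

variable {R : Type*} [CommRing R]

def homMonomial (n j : ℕ) (a b : R) : R := if j ≤ n then a ^ (n - j) * b ^ j else 0

def pBWeight (n : ℕ) (a b : R) : ℕ → R
  | 0 => homMonomial n 0 a b
  | k + 1 => homMonomial n k a b + homMonomial n (k + 1) a b

variable {n j k : ℕ} {a b : R}

lemma homMonomial_of_lt (h : n < j) : homMonomial n j a b = 0 := by
  simp [homMonomial, Nat.not_le.mpr h]

lemma homMonomial_succ_of_le (h : j ≤ n) :
    homMonomial (n + 1) j a b = a * homMonomial n j a b := by
  simp only [homMonomial, h, Nat.le_succ_of_le h, if_true, Nat.succ_sub h, pow_succ]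
  ring

lemma homMonomial_succ_succ : homMonomial (n + 1) (j + 1) a b = b * homMonomial n j a b := by
  simp only [homMonomial, Nat.add_le_add_iff_right, Nat.add_sub_add_right, pow_succ]
  split_ifs <;> ring

lemma pBWeight_zero : pBWeight n a b 0 = a ^ n := by
  simp [pBWeight, homMonomial]

lemma pBWeight_succ_one : pBWeight (n + 1) a b 1 = a ^ n * (a + b) := by
  simp [pBWeight, homMonomial, pow_succ]
  ring

lemma pBWeight_self_add_one : pBWeight n a b (n + 1) = b ^ n := by
  simp [pBWeight, homMonomial]

lemma pBWeight_eq_zero (hk : n + 2 ≤ k) : pBWeight n a b k = 0 := by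
  obtain ⟨k, rfl⟩ : ∃ i, k = i + 1 := ⟨k - 1, by omega⟩
  simp [pBWeight, homMonomial_of_lt (show n < k by omega),
    homMonomial_of_lt (show n < k + 1 by omega)]

lemma pBWeight_succ_of_le (hk : k ≤ n) : pBWeight (n + 1) a b k = a * pBWeight n a b k := by
  cases k with
  | zero => exact homMonomial_succ_of_le hk
  | succ k =>
    simp only [pBWeight, homMonomial_succ_of_le hk, homMonomial_succ_of_le (Nat.le_of_succ_le hk)]
    ring

lemma pBWeight_succ_add_two : pBWeight (n + 1) a b (k + 2) = b * pBWeight n a b (k + 1) := by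
  simp only [pBWeight, homMonomial_succ_succ]
  ring

lemma sum_mul_pBWeight (c : ℕ → R) :
    ∑ k ∈ Finset.range (n + 2), c k * pBWeight n a b k =
      ∑ j ∈ Finset.range (n + 1), (c j + c (j + 1)) * (a ^ (n - j) * b ^ j) := by
  have hshift : ∑ j ∈ Finset.range (n + 1), c (j + 1) * homMonomial n (j + 1) a b +
      c 0 * homMonomial n 0 a b = ∑ j ∈ Finset.range (n + 1), c j * homMonomial n j a b := by
    rw [← Finset.sum_range_succ' (fun j => c j * homMonomial n j a b), Finset.sum_range_succ,
      homMonomial_of_lt (lt_add_one n), mul_zero, add_zero]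
  have hmono : ∀ j ∈ Finset.range (n + 1), (c j + c (j + 1)) * (a ^ (n - j) * b ^ j) =
      c j * homMonomial n j a b + c (j + 1) * homMonomial n j a b := by
    intro j hj
    rw [homMonomial, if_pos (Finset.mem_range_succ_iff.mp hj)]
    ring
  rw [Finset.sum_range_succ', Finset.sum_congr rfl hmono, Finset.sum_add_distrib]
  simp only [pBWeight, mul_add, Finset.sum_add_distrib]
  linear_combination hshift

lemma sum_pBWeight (hab : a - b = 2) :
    ∑ k ∈ Finset.range (n + 2), pBWeight n a b k = a ^ (n + 1) - b ^ (n + 1) := by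
  have hsum := sum_mul_pBWeight (n := n) (a := a) (b := b) (fun _ => 1)
  have hgeom := geom_sum₂_mul b a (n + 1)
  simp only [one_mul] at hsum
  simp only [Nat.add_sub_cancel, mul_comm (b ^ _)] at hgeom
  rw [hsum, ← Finset.mul_sum]
  linear_combination -hgeom - (∑ j ∈ Finset.range (n + 1), a ^ (n - j) * b ^ j) * hab

end Weights

/- `pBCoeff n k m` is the coefficient of `x^m` in `p^B_{n,k} / (1 - x)^(n+1)`. The constant term
does not follow the pattern `pBWeight n 1 (-1) k` at `k = n + 1`, since `x ∣ p^B_{n,n+1}`. -/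
def pBCoeff (n k : ℕ) : ℕ → ℝ
  | 0 => if k = 0 then 1 else 0
  | m + 1 => pBWeight n (2 * (m : ℝ) + 3) (2 * m + 1) k

def pBSeries (n k : ℕ) : ℝ⟦X⟧ := PowerSeries.mk (pBCoeff n k)

lemma pBCoeff_succ (n k m : ℕ) :
    pBCoeff n k (m + 1) = pBWeight n (2 * (m : ℝ) + 3) (2 * m + 1) k :=
  rfl

lemma pBCoeff_zero_apply (n m : ℕ) : pBCoeff n 0 m = (2 * m + 1) ^ n := by
  cases m with
  | zero => simp [pBCoeff]
  | succ m =>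
    simp only [pBCoeff, pBWeight_zero]
    push_cast
    ring

lemma one_sub_X_mul_pBSeries_succ_zero (n : ℕ) :
    (1 - PowerSeries.X) * pBSeries (n + 1) 0 = ∑ i ∈ Finset.range (n + 2), pBSeries n i := by
  ext m
  rw [map_sum]
  cases m with
  | zero => simp [pBSeries, pBCoeff]
  | succ m =>
    have hab : (2 * (m : ℝ) + 3) - (2 * m + 1) = 2 := by ring
    simp only [coeff_succ_one_sub_X_mul, pBSeries, coeff_mk, pBCoeff_zero_apply]
    simp only [pBCoeff_succ, sum_pBWeight hab]
    push_cast
    ring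

lemma pBSeries_succ_one (n : ℕ) :
    pBSeries (n + 1) 1 = 2 * pBSeries (n + 1) 0 - 2 * pBSeries n 0 := by
  ext m
  cases m with
  | zero => simp [pBSeries, pBCoeff, two_mul]
  | succ m =>
    simp only [pBSeries, pBCoeff, two_mul, map_sub, map_add, coeff_mk, pBWeight_zero,
      pBWeight_succ_one]
    ring

lemma pBSeries_succ_add_two {n k : ℕ} (hk : k + 1 ≤ n) :
    pBSeries (n + 1) (k + 2) = pBSeries (n + 1) (k + 1) - 2 * pBSeries n (k + 1) := by
  ext m
  cases m with
  | zero => simp [pBSeries, pBCoeff, two_mul]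
  | succ m =>
    simp only [pBSeries, pBCoeff, two_mul, map_sub, map_add, coeff_mk, pBWeight_succ_add_two,
      pBWeight_succ_of_le hk]
    ring

lemma pBSeries_self_add_one (n : ℕ) : pBSeries n (n + 1) = PowerSeries.X * pBSeries n 0 := by
  ext m
  cases m with
  | zero => simp [pBSeries, pBCoeff]
  | succ m =>
    simp only [pBSeries, coeff_succ_X_mul, coeff_mk, pBCoeff_zero_apply, pBCoeff_succ,
      pBWeight_self_add_one]

lemma pBSeries_eq_zero {n k : ℕ} (hk : n + 2 ≤ k) : pBSeries n k = 0 := by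
  ext m
  cases m with
  | zero => simp [pBSeries, pBCoeff, show k ≠ 0 by omega]
  | succ m => simp [pBSeries, pBCoeff, pBWeight_eq_zero hk]

lemma one_sub_X_mul_pBSeries_succ_succ {n k : ℕ} (hk : k ≤ n) :
    (1 - PowerSeries.X) * pBSeries (n + 1) (k + 1) =
      2 * PowerSeries.X * ∑ i ∈ Finset.range (k + 1), pBSeries n i +
        2 * ∑ i ∈ Finset.Icc (k + 1) (n + 1), pBSeries n i := by
  induction k with
  | zero =>
    have hsplit : ∑ i ∈ Finset.range (n + 2), pBSeries n i =
        pBSeries n 0 + ∑ i ∈ Finset.Icc 1 (n + 1), pBSeries n i := by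
      rw [Nat.range_succ_eq_Icc_zero, ← Finset.insert_Icc_add_one_left_eq_Icc (Nat.zero_le _),
        Finset.sum_insert (by simp)]
      rfl
    rw [pBSeries_succ_one, Finset.sum_range_one]
    linear_combination 2 * one_sub_X_mul_pBSeries_succ_zero n + 2 * hsplit
  | succ k ih =>
    have hsplit : ∑ i ∈ Finset.Icc (k + 1) (n + 1), pBSeries n i =
        pBSeries n (k + 1) + ∑ i ∈ Finset.Icc (k + 2) (n + 1), pBSeries n i := by
      rw [← Finset.insert_Icc_add_one_left_eq_Icc (by omega : k + 1 ≤ n + 1),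
        Finset.sum_insert (by simp)]
      rfl
    rw [pBSeries_succ_add_two hk]
    linear_combination ih (by omega) + 2 * hsplit -
      2 * PowerSeries.X * Finset.sum_range_succ (pBSeries n) (k + 1)

lemma coe_pB (n k : ℕ) :
    (pB n k : ℝ⟦X⟧) = (1 - PowerSeries.X) ^ (n + 1) * pBSeries n k := by
  induction n generalizing k with
  | zero =>
    have h0 : (1 - PowerSeries.X) * pBSeries 0 0 = 1 := by
      have hmk : pBSeries 0 0 = PowerSeries.mk 1 := by
        ext m
        cases m <;> simp [pBSeries, pBCoeff, pBWeight_zero]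
      rw [hmk, mul_comm, mk_one_mul_one_sub_eq_one]
    match k with
    | 0 => rw [pB, zero_add, pow_one, h0, Polynomial.coe_one]
    | 1 => rw [pB, zero_add, pow_one, Polynomial.coe_X, pBSeries_self_add_one, mul_left_comm, h0,
        mul_one]
    | k + 2 => rw [pB, pBSeries_eq_zero (by omega), mul_zero, Polynomial.coe_zero]
  | succ n ih =>
    have hsum (s : Finset ℕ) : ((∑ i ∈ s, pB n i : ℝ[X]) : ℝ⟦X⟧) =
        (1 - PowerSeries.X) ^ (n + 1) * ∑ i ∈ s, pBSeries n i := by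
      rw [Polynomial.coe_finsetSum, Finset.mul_sum]
      exact Finset.sum_congr rfl fun i _ => ih i
    have h2 : ((2 : ℝ[X]) : ℝ⟦X⟧) = 2 := map_ofNat Polynomial.coeToPowerSeries.ringHom 2
    match k with
    | 0 =>
      rw [pB, hsum, ← one_sub_X_mul_pBSeries_succ_zero]
      ring
    | k + 1 =>
      by_cases hk : k + 1 ≤ n + 1
      · rw [pB, if_pos hk]
        push_cast [hsum, h2]
        linear_combination (-(1 - PowerSeries.X) ^ (n + 1)) *
          one_sub_X_mul_pBSeries_succ_succ (Nat.le_of_succ_le_succ hk)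
      · by_cases htop : k + 1 = n + 2
        · rw [pB, if_neg hk, if_pos htop, htop, pBSeries_self_add_one, Polynomial.coe_mul, hsum,
            ← one_sub_X_mul_pBSeries_succ_zero, Polynomial.coe_X]
          ring
        · rw [pB, if_neg hk, if_neg htop, pBSeries_eq_zero (by omega), mul_zero,
            Polynomial.coe_zero]

def IsCubicalHVector (n : ℕ) (f h : ℕ → ℝ) : Prop :=
  (1 + Polynomial.X) * ∑ k ∈ Finset.range (n + 2), Polynomial.C (h k) * Polynomial.X ^ k =
    1 + (∑ k ∈ Finset.range (n + 1), Polynomial.C (f k) * Polynomial.X ^ (k + 1) *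
          (Polynomial.C (1 / 2 : ℝ) * (1 - Polynomial.X)) ^ (n - k)) +
      Polynomial.C (h (n + 1)) * Polynomial.X ^ (n + 2)

namespace IsCubicalHVector

variable {n : ℕ} {f h : ℕ → ℝ}

lemma apply_zero (hfh : IsCubicalHVector n f h) : h 0 = 1 := by
  simpa [Polynomial.eval_finsetSum, Finset.sum_range_succ'] using congrArg (Polynomial.eval 0) hfh

lemma sum_add_succ_eq (hfh : IsCubicalHVector n f h) :
    ∑ j ∈ Finset.range (n + 1), Polynomial.C (h j + h (j + 1)) * Polynomial.X ^ j =
      ∑ k ∈ Finset.range (n + 1), Polynomial.C (f k) * Polynomial.X ^ k *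
        (Polynomial.C (1 / 2 : ℝ) * (1 - Polynomial.X)) ^ (n - k) := by
  have hfactor : ∑ k ∈ Finset.range (n + 1), Polynomial.C (f k) * Polynomial.X ^ (k + 1) *
        (Polynomial.C (1 / 2 : ℝ) * (1 - Polynomial.X)) ^ (n - k) =
      Polynomial.X * ∑ k ∈ Finset.range (n + 1), Polynomial.C (f k) * Polynomial.X ^ k *
        (Polynomial.C (1 / 2 : ℝ) * (1 - Polynomial.X)) ^ (n - k) := by
    rw [Finset.mul_sum]
    exact Finset.sum_congr rfl fun k _ => by ring
  have hexpand := one_add_mul_sum_range (fun k => Polynomial.C (h k)) Polynomial.X n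
  simp only [← map_add, hfh.apply_zero, map_one] at hexpand
  unfold IsCubicalHVector at hfh
  apply mul_left_cancel₀ Polynomial.X_ne_zero
  linear_combination hfh - hexpand + hfactor

lemma sum_mul_pBWeight_eq (hfh : IsCubicalHVector n f h) {a b : ℝ} (ha : a ≠ 0)
    (hab : a - b = 2) :
    ∑ k ∈ Finset.range (n + 2), h k * pBWeight n a b k =
      ∑ k ∈ Finset.range (n + 1), f k * b ^ k := by
  have hhalf : 1 / 2 * (1 - b / a) = 1 / a := by
    field_simp
    linear_combination hab
  calc ∑ k ∈ Finset.range (n + 2), h k * pBWeight n a b k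
      = ∑ j ∈ Finset.range (n + 1), (h j + h (j + 1)) * (a ^ (n - j) * b ^ j) :=
        sum_mul_pBWeight h
    _ = a ^ n * ∑ j ∈ Finset.range (n + 1), (h j + h (j + 1)) * (b / a) ^ j := by
        rw [Finset.mul_sum]
        refine Finset.sum_congr rfl fun j hj => ?_
        rw [mul_left_comm (a ^ n), pow_mul_div_pow b ha (Finset.mem_range_succ_iff.mp hj)]
    _ = a ^ n * ∑ k ∈ Finset.range (n + 1), f k * (b / a) ^ k * (1 / a) ^ (n - k) := by
        have hev := congrArg (fun p => a ^ n * p.eval (b / a)) hfh.sum_add_succ_eq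
        simpa only [Polynomial.eval_finsetSum, Polynomial.eval_mul, Polynomial.eval_C,
          Polynomial.eval_pow, Polynomial.eval_X, Polynomial.eval_sub, Polynomial.eval_one,
          hhalf] using hev
    _ = ∑ k ∈ Finset.range (n + 1), f k * b ^ k := by
        rw [Finset.mul_sum]
        refine Finset.sum_congr rfl fun k hk => ?_
        have hinv : a ^ (n - k) * (1 / a) ^ (n - k) = 1 := by
          rw [← mul_pow, mul_one_div_cancel ha, one_pow]
        linear_combination (f k * (1 / a) ^ (n - k)) *
          pow_mul_div_pow b ha (Finset.mem_range_succ_iff.mp hk) + f k * b ^ k * hinv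

lemma one_add_X_mul_sum_eq (hfh : IsCubicalHVector n f h) :
    1 + PowerSeries.X * ∑ k ∈ Finset.range (n + 1),
        PowerSeries.C (f k) * PowerSeries.mk (fun m => ((2 * m + 1 : ℝ)) ^ k) =
      ∑ k ∈ Finset.range (n + 2), PowerSeries.C (h k) * pBSeries n k := by
  ext m
  rw [map_add, map_sum]
  cases m with
  | zero => simp [pBSeries, pBCoeff, hfh.apply_zero]
  | succ m =>
    simp only [PowerSeries.coeff_one, coeff_succ_X_mul, map_sum, PowerSeries.coeff_C_mul,
      coeff_mk, pBSeries, pBCoeff_succ]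
    rw [hfh.sum_mul_pBWeight_eq (by positivity) (by ring)]
    simp

end IsCubicalHVector

/-- Theorem 3.2 (the `h`-vector transformation, algebraic form): if
`(1+x) ∑_{k=0}^{n+1} h_k x^k = 1 + ∑_{k=0}^n f_k x^{k+1} ((1-x)/2)^{n-k} + h_{n+1} x^{n+2}`
in `ℝ[x]`, then
`(1-x)^{n+1} + x ∑_{k=0}^n f_k (1-x)^{n-k} B_k(x) = ∑_{k=0}^{n+1} h_k p^B_{n,k}(x)`,
where `B_k` is the type `B` Eulerian polynomial, determined by
`∑_{m ≥ 0} (2m+1)^k x^m = B_k(x)/(1-x)^{k+1}` in `ℝ⟦x⟧`. -/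
theorem h_transformation (n : ℕ) (f h : ℕ → ℝ) (B : ℕ → Polynomial ℝ)
    (hB : ∀ k, (B k : PowerSeries ℝ) =
      (1 - PowerSeries.X) ^ (k + 1) * PowerSeries.mk (fun m => ((2 * m + 1 : ℝ)) ^ k))
    (hdef : (1 + Polynomial.X) * ∑ k ∈ Finset.range (n + 2), Polynomial.C (h k) * Polynomial.X ^ k =
      1 + (∑ k ∈ Finset.range (n + 1), Polynomial.C (f k) * Polynomial.X ^ (k + 1) *
            (Polynomial.C (1 / 2 : ℝ) * (1 - Polynomial.X)) ^ (n - k)) +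
        Polynomial.C (h (n + 1)) * Polynomial.X ^ (n + 2)) :
    (1 - Polynomial.X) ^ (n + 1) +
        Polynomial.X * ∑ k ∈ Finset.range (n + 1),
          Polynomial.C (f k) * (1 - Polynomial.X) ^ (n - k) * B k =
      ∑ k ∈ Finset.range (n + 2), Polynomial.C (h k) * pB n k := by
  have hfh : IsCubicalHVector n f h := hdef
  have hBk (k : ℕ) (hk : k ∈ Finset.range (n + 1)) :
      PowerSeries.C (f k) * (1 - PowerSeries.X) ^ (n - k) * (B k : ℝ⟦X⟧) =
        (1 - PowerSeries.X) ^ (n + 1) *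
          (PowerSeries.C (f k) * PowerSeries.mk (fun m => ((2 * m + 1 : ℝ)) ^ k)) := by
    rw [hB, ← pow_mul_pow_sub _ (show k + 1 ≤ n + 1 from Finset.mem_range.mp hk),
      Nat.add_sub_add_right]
    ring
  rw [← Polynomial.coe_inj]
  push_cast [coe_pB]
  calc _ = (1 - PowerSeries.X) ^ (n + 1) * (1 + PowerSeries.X * ∑ k ∈ Finset.range (n + 1),
          PowerSeries.C (f k) * PowerSeries.mk (fun m => ((2 * m + 1 : ℝ)) ^ k)) := by
        rw [Finset.sum_congr rfl hBk, ← Finset.mul_sum]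
        ring
    _ = _ := by
        rw [hfh.one_add_X_mul_sum_eq, Finset.mul_sum]
        exact Finset.sum_congr rfl fun k _ => by ring
end
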